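/- arXiv:1805.05900 — 3 statements merged into one kernel-verified Lean document; each statement's English description precedes it below -/
import Mathlib

section
/- Let G be a stitched 2-ichromatic ordered graph with parts of sizes m and n, and let r = min(m,n) - 1. Then the 2-color ordered Ramsey number satisfies R(G) ≥ 4r + 1. -/
/-!
Colour the edges of the complete graph on `{0, …, 4r - 1}` as follows: cut the vertices into four
consecutive blocks of length `r` and colour `xy` by the parity of the sum of the block indices of
`x` and `y`. In a monochromatic copy of `G` every edge joins the two parts, so the block index of a
vertex, shifted by the colour on the second part, has constant parity on each component. Hence
`v_1, v_m` lie in blocks of equal parity, and so do `v_{m+1}, v_{m+n}`. As `v_1, …, v_m` spans at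
least `r` positions, `v_m` lies at least two blocks after `v_1`, and likewise `v_{m+n}` lies two
blocks after `v_{m+1}`: it would have to be in the fifth block.

Since `sInf ∅ = 0`, the lower bound also needs ordered Ramsey numbers to be finite; this is the
usual greedy argument through pre-homogeneous sequences.
-/

/-- A `t`-edge-coloring `c` of the complete graph on the ordered vertex set `Fin N`
contains a monochromatic ordered copy of the ordered graph `G` on `Fin M`. -/
def HasMonoCopy {M N t : ℕ} (G : SimpleGraph (Fin M)) (c : Fin N → Fin N → Fin t) : Prop :=
  ∃ k : Fin t, ∃ f : Fin M → Fin N, StrictMono f ∧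
    ∀ u v : Fin M, u < v → G.Adj u v → c (f u) (f v) = k

/-- The `t`-color ordered Ramsey number of the ordered graph `G`: the least `N` such that
every `t`-coloring of the edges of the complete graph on `Fin N` contains a monochromatic
ordered copy of `G`. -/
noncomputable def orderedRamsey {M : ℕ} (t : ℕ) (G : SimpleGraph (Fin M)) : ℕ :=
  sInf {N : ℕ | ∀ c : Fin N → Fin N → Fin t, HasMonoCopy G c}

/-- An interval coloring of an ordered graph with `k` parts, encoded as a monotone
surjection onto `Fin k` whose fibers (the parts, which are intervals of consecutive
vertices) are independent sets. -/
def IsIntervalColoring {N k : ℕ} (G : SimpleGraph (Fin N)) (p : Fin N → Fin k) : Prop :=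
  Monotone p ∧ Function.Surjective p ∧ ∀ u v : Fin N, G.Adj u v → p u ≠ p v

/-- The interval chromatic number of an ordered graph. -/
noncomputable def intervalChromatic {N : ℕ} (G : SimpleGraph (Fin N)) : ℕ :=
  sInf {k : ℕ | ∃ p : Fin N → Fin k, IsIntervalColoring G p}

section Ramsey

variable {α κ : Type*} [LinearOrder α] [Fintype κ]

theorem exists_strictMono_preHomogeneous (c : α → α → κ) (L : ℕ) (V : Finset α)
    (hV : (Fintype.card κ + 1) ^ L ≤ V.card) :
    ∃ (x : Fin L → α) (ℓ : Fin L → κ), StrictMono x ∧ (∀ i, x i ∈ V) ∧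
      ∀ i j, i < j → c (x i) (x j) = ℓ i := by
  classical
  induction L generalizing V with
  | zero => exact ⟨Fin.elim0, Fin.elim0, fun i => i.elim0, fun i => i.elim0, fun i => i.elim0⟩
  | succ L ih =>
    have hne : V.Nonempty := Finset.card_pos.1 (lt_of_lt_of_le (by positivity) hV)
    set v := V.min' hne
    have hfiber : Fintype.card κ * (Fintype.card κ + 1) ^ L ≤ (V.erase v).card := by
      rw [Finset.card_erase_of_mem (V.min'_mem hne)]
      have hpos : 0 < (Fintype.card κ + 1) ^ L := by positivity
      rw [pow_succ, mul_add, mul_one, mul_comm] at hV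
      omega
    -- `c v v` witnesses that `κ` is nonempty
    obtain ⟨k, -, hk⟩ := Finset.exists_le_card_fiber_of_mul_le_card_of_maps_to
      (f := c v) (fun _ _ => Finset.mem_univ _) ⟨c v v, Finset.mem_univ _⟩
      (by rwa [Finset.card_univ])
    obtain ⟨x, ℓ, hx, hxV, hxℓ⟩ := ih _ hk
    refine ⟨Fin.cons v x, Fin.cons k ℓ, ?_, ?_, ?_⟩
    · have hxV' : ∀ j, x j ∈ V.erase v := fun j => (Finset.mem_filter.1 (hxV j)).1
      refine Fin.strictMono_cons.2 ⟨fun j => ?_, hx⟩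
      obtain ⟨hxjv, hxj⟩ := Finset.mem_erase.1 (hxV' j)
      exact lt_of_le_of_ne (V.min'_le _ hxj) (Ne.symm hxjv)
    · refine Fin.cases (V.min'_mem hne) fun j => ?_
      simpa using Finset.mem_of_mem_erase (Finset.mem_filter.1 (hxV j)).1
    · refine Fin.cases (fun j h0j => ?_) (fun i j hij => ?_)
      · obtain ⟨j, rfl⟩ := Fin.exists_succ_eq.2 (Fin.pos_iff_ne_zero.1 h0j)
        simpa using (Finset.mem_filter.1 (hxV j)).2
      · obtain ⟨j, rfl⟩ := Fin.exists_succ_eq.2 (ne_of_gt (lt_of_le_of_lt (Fin.zero_le _) hij))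
        simpa using hxℓ i j (Fin.succ_lt_succ_iff.1 hij)

theorem exists_strictMono_monochromatic [Fintype α] (c : α → α → κ) (s : ℕ)
    (hα : (Fintype.card κ + 1) ^ (Fintype.card κ * s) ≤ Fintype.card α) :
    ∃ (g : Fin s → α) (k : κ), StrictMono g ∧ ∀ i j, i < j → c (g i) (g j) = k := by
  classical
  obtain ⟨x, ℓ, hx, -, hxℓ⟩ := exists_strictMono_preHomogeneous c _ Finset.univ hα
  obtain ⟨a⟩ : Nonempty α := Fintype.card_pos_iff.1 (lt_of_lt_of_le (by positivity) hα)
  have : Nonempty κ := ⟨c a a⟩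
  obtain ⟨k, hk⟩ := Fintype.exists_le_card_fiber_of_mul_le_card ℓ (n := s) (by simp)
  obtain ⟨S, hSk, hS⟩ := Finset.exists_subset_card_eq hk
  refine ⟨x ∘ S.orderEmbOfFin hS, k, hx.comp (S.orderEmbOfFin hS).strictMono, fun i j hij => ?_⟩
  have hiS := hSk (S.orderEmbOfFin_mem hS i)
  rw [Finset.mem_filter] at hiS
  simpa [hiS.2] using hxℓ _ _ ((S.orderEmbOfFin hS).lt_iff_lt.2 hij)

end Ramsey

theorem hasMonoCopy_of_pow_le {M N t : ℕ} (G : SimpleGraph (Fin M)) (hN : (t + 1) ^ (t * M) ≤ N)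
    (c : Fin N → Fin N → Fin t) : HasMonoCopy G c := by
  obtain ⟨g, k, hg, hgk⟩ := exists_strictMono_monochromatic c M (by simpa using hN)
  exact ⟨k, g, hg, fun u v huv _ => hgk u v huv⟩

theorem le_orderedRamsey {M t N : ℕ} (G : SimpleGraph (Fin M))
    (h : ∀ N' < N, ∃ c : Fin N' → Fin N' → Fin t, ¬ HasMonoCopy G c) :
    N ≤ orderedRamsey t G :=
  le_csInf ⟨_, hasMonoCopy_of_pow_le G le_rfl⟩ fun N' hN' => not_lt.1 fun hlt =>
    let ⟨c, hc⟩ := h N' hlt; hc (hN' c)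

theorem Fin.val_add_sub_le_of_strictMono {a b : ℕ} {f : Fin a → Fin b} (hf : StrictMono f)
    {i j : Fin a} (hij : i ≤ j) : (f i : ℕ) + (j - i) ≤ f j := by
  have hcard := Finset.card_le_card_of_injOn f
    (fun x hx => by
      rw [Finset.coe_Icc, Set.mem_Icc] at hx
      simp only [Finset.coe_Icc, Set.mem_Icc]
      exact ⟨hf.monotone hx.1, hf.monotone hx.2⟩)
    hf.injective.injOn (s := Finset.Icc i j) (t := Finset.Icc (f i) (f j))
  rw [Fin.card_Icc, Fin.card_Icc] at hcard
  have : f i ≤ f j := hf.monotone hij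
  rw [Fin.le_def] at hij this
  omega

theorem SimpleGraph.Reachable.eq_of_forall_adj_eq {V β : Type*} {G : SimpleGraph V} {φ : V → β}
    (hφ : ∀ x y, G.Adj x y → φ x = φ y) {u v : V} (h : G.Reachable u v) : φ u = φ v := by
  obtain ⟨p⟩ := h
  induction p with
  | nil => rfl
  | cons hxy _ ih => exact (hφ _ _ hxy).trans ih

theorem Nat.div_add_two_le_div_of_mod_two_eq {a b r : ℕ} (hr : 0 < r) (hab : a + r ≤ b)
    (hpar : a / r % 2 = b / r % 2) : a / r + 2 ≤ b / r := by
  have : a / r + 1 ≤ b / r := by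
    rw [← Nat.add_div_right a hr]
    exact Nat.div_le_div_right hab
  omega

theorem four_mul_le_of_block_parity_eq {r a b c d : ℕ} (hr : 0 < r) (hab : a + r ≤ b)
    (hbc : b ≤ c) (hcd : c + r ≤ d) (hpab : a / r % 2 = b / r % 2)
    (hpcd : c / r % 2 = d / r % 2) : 4 * r ≤ d := by
  have := Nat.div_add_two_le_div_of_mod_two_eq hr hab hpab
  have := Nat.div_add_two_le_div_of_mod_two_eq hr hcd hpcd
  have := Nat.div_le_div_right (c := r) hbc
  rw [← Nat.le_div_iff_mul_le hr]
  linarith [Nat.zero_le (a / r)]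

def blockColoring (r N : ℕ) : Fin N → Fin N → Fin 2 :=
  fun x y => ⟨(x / r + y / r) % 2, Nat.mod_lt _ two_pos⟩

section BlockColoring

variable {M m r N : ℕ} {G : SimpleGraph (Fin M)}
  (hpart1 : ∀ u v : Fin M, (u : ℕ) < m → (v : ℕ) < m → ¬ G.Adj u v)
  (hpart2 : ∀ u v : Fin M, m ≤ (u : ℕ) → m ≤ (v : ℕ) → ¬ G.Adj u v)
include hpart1 hpart2

theorem block_parity_eq_of_reachable {f : Fin M → Fin N} {k : Fin 2}
    (hf : ∀ u v, u < v → G.Adj u v → blockColoring r N (f u) (f v) = k)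
    {u v : Fin M} (huv : G.Reachable u v) (hside : (u : ℕ) < m ↔ (v : ℕ) < m) :
    (f u : ℕ) / r % 2 = (f v : ℕ) / r % 2 := by
  let φ : Fin M → ℕ := fun x => ((f x : ℕ) / r + if (x : ℕ) < m then 0 else k) % 2
  have hcross : ∀ x y, x < y → G.Adj x y → φ x = φ y := by
    intro x y hxy hadj
    have hx : (x : ℕ) < m := by
      by_contra hx
      exact hpart2 x y (by omega) (by rw [Fin.lt_def] at hxy; omega) hadj
    have hy : ¬ (y : ℕ) < m := fun hy => hpart1 x y hx hy hadj
    have hcol := congrArg Fin.val (hf x y hxy hadj)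
    simp only [blockColoring] at hcol
    simp only [φ, if_pos hx, if_neg hy]
    omega
  have hφ : ∀ x y, G.Adj x y → φ x = φ y := by
    intro x y hadj
    rcases lt_or_gt_of_ne hadj.ne with hxy | hyx
    · exact hcross x y hxy hadj
    · exact (hcross y x hyx hadj.symm).symm
  have := huv.eq_of_forall_adj_eq hφ
  simp only [φ] at this
  split_ifs at this <;> omega

theorem four_mul_lt_of_hasMonoCopy_blockColoring (hcopy : HasMonoCopy G (blockColoring r N))
    {a b c d : Fin M} (hab : G.Reachable a b) (hcd : G.Reachable c d)
    (hrab : (a : ℕ) + r ≤ b) (hb : (b : ℕ) < m) (hc : m ≤ (c : ℕ)) (hrcd : (c : ℕ) + r ≤ d) :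
    4 * r < N := by
  obtain ⟨k, f, hf, hcol⟩ := hcopy
  obtain rfl | hr := r.eq_zero_or_pos
  · exact (f a).pos
  have hgap {i j : Fin M} (hij : (i : ℕ) + r ≤ j) : (f i : ℕ) + r ≤ f j := by
    have := Fin.val_add_sub_le_of_strictMono hf (i := i) (j := j) (Fin.le_def.2 (by omega))
    omega
  have hbc : f b ≤ f c := hf.monotone (Fin.le_def.2 (by omega))
  have := four_mul_le_of_block_parity_eq hr (hgap hrab) hbc (hgap hrcd)
    (block_parity_eq_of_reachable hpart1 hpart2 hcol hab (by omega))
    (block_parity_eq_of_reachable hpart1 hpart2 hcol hcd (by omega))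
  exact this.trans_lt (f d).isLt

end BlockColoring

/-- If `G` is a stitched 2-ichromatic ordered graph with parts of sizes `m` and `n`,
then `R(G) ≥ 4r + 1` where `r = min(m,n) - 1`. -/
theorem stmt0 {m n : ℕ} (hm : 1 ≤ m) (hn : 1 ≤ n)
    (G : SimpleGraph (Fin (m + n)))
    (hpart1 : ∀ u v : Fin (m + n), (u : ℕ) < m → (v : ℕ) < m → ¬ G.Adj u v)
    (hpart2 : ∀ u v : Fin (m + n), m ≤ (u : ℕ) → m ≤ (v : ℕ) → ¬ G.Adj u v)
    (hstitched : G.Reachable ⟨0, by omega⟩ ⟨m - 1, by omega⟩ ∧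
      G.Reachable ⟨0, by omega⟩ ⟨m, by omega⟩ ∧
      G.Reachable ⟨0, by omega⟩ ⟨m + n - 1, by omega⟩) :
    4 * (min m n - 1) + 1 ≤ orderedRamsey 2 G := by
  obtain ⟨hfirst, hsecond, hlast⟩ := hstitched
  refine le_orderedRamsey G fun N hN => ⟨blockColoring (min m n - 1) N, fun hcopy => ?_⟩
  have := four_mul_lt_of_hasMonoCopy_blockColoring hpart1 hpart2 hcopy hfirst
    (hsecond.symm.trans hlast) (by simp; omega) (by simp; omega) (by simp) (by simp; omega)
  omega
end

section
/- Let m, n ≥ 2 and let G be the ordered graph on vertices v_1, ..., v_{m+n} whose only edges are the two nested edges v_1 v_{m+n} and v_m v_{m+1}. Then R(G) = 2m + 2n - 2. -/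
theorem StrictMono.val_add_sub_le {M N : ℕ} {f : Fin M → Fin N} (hf : StrictMono f)
    {i j : Fin M} (hij : i ≤ j) : (f i : ℕ) + (j - i) ≤ f j := by
  have hcard := Finset.card_le_card_of_injOn f
    (fun k hk => by
      simp only [Finset.coe_Icc, Set.mem_Icc] at hk ⊢
      exact ⟨hf.monotone hk.1, hf.monotone hk.2⟩)
    hf.injective.injOn (s := Finset.Icc i j) (t := Finset.Icc (f i) (f j))
  have hfij : (f i : ℕ) ≤ f j := hf.monotone hij
  rw [Fin.card_Icc, Fin.card_Icc] at hcard
  omega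

theorem hasMonoCopy_fromEdgeSet_pair_iff {M N t : ℕ} {a b a' b' : Fin M} (hab : a < b)
    (hab' : a' < b') (c : Fin N → Fin N → Fin t) :
    HasMonoCopy (SimpleGraph.fromEdgeSet {s(a, b), s(a', b')}) c ↔
      ∃ f : Fin M → Fin N, StrictMono f ∧ c (f a) (f b) = c (f a') (f b') := by
  have adj_iff : ∀ u v : Fin M, u < v →
      ((SimpleGraph.fromEdgeSet {s(a, b), s(a', b')}).Adj u v ↔
        (u = a ∧ v = b) ∨ (u = a' ∧ v = b')) := by
    intro u v huv
    simp only [SimpleGraph.fromEdgeSet_adj, Set.mem_insert_iff, Set.mem_singleton_iff,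
      Sym2.eq_iff, huv.ne, ne_eq, not_false_eq_true, and_true]
    constructor
    · rintro ((h | ⟨rfl, rfl⟩) | (h | ⟨rfl, rfl⟩))
      exacts [Or.inl h, absurd huv (lt_asymm hab), Or.inr h, absurd huv (lt_asymm hab')]
    · rintro (h | h) <;> simp [h]
  constructor
  · rintro ⟨k, f, hf, hcol⟩
    exact ⟨f, hf, (hcol a b hab ((adj_iff a b hab).2 (Or.inl ⟨rfl, rfl⟩))).trans
      (hcol a' b' hab' ((adj_iff a' b' hab').2 (Or.inr ⟨rfl, rfl⟩))).symm⟩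
  · rintro ⟨f, hf, hcol⟩
    refine ⟨c (f a) (f b), f, hf, fun u v huv hadj => ?_⟩
    rcases (adj_iff u v huv).1 hadj with ⟨rfl, rfl⟩ | ⟨rfl, rfl⟩
    exacts [rfl, hcol.symm]

def nestedEdgesGraph (m n : ℕ) (hn : 0 < n) : SimpleGraph (Fin (m + n)) :=
  SimpleGraph.fromEdgeSet
    {s((⟨0, by omega⟩ : Fin (m + n)), (⟨m + n - 1, by omega⟩ : Fin (m + n))),
     s((⟨m - 1, by omega⟩ : Fin (m + n)), (⟨m, by omega⟩ : Fin (m + n)))}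

theorem hasMonoCopy_nestedEdgesGraph_iff {m n N t : ℕ} (hm : 2 ≤ m) (hn : 2 ≤ n)
    (c : Fin N → Fin N → Fin t) :
    HasMonoCopy (nestedEdgesGraph m n (by omega)) c ↔
      ∃ x y z w : Fin N, (x : ℕ) + (m - 1) ≤ y ∧ y < z ∧ (z : ℕ) + (n - 1) ≤ w ∧
        c x w = c y z := by
  rw [nestedEdgesGraph, hasMonoCopy_fromEdgeSet_pair_iff (Fin.mk_lt_mk.2 (by omega))
    (Fin.mk_lt_mk.2 (by omega))]
  constructor
  · rintro ⟨f, hf, hcol⟩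
    have left_gap := hf.val_add_sub_le (i := ⟨0, by omega⟩) (j := ⟨m - 1, by omega⟩)
      (Fin.mk_le_mk.2 (by omega))
    have right_gap := hf.val_add_sub_le (i := ⟨m, by omega⟩) (j := ⟨m + n - 1, by omega⟩)
      (Fin.mk_le_mk.2 (by omega))
    dsimp only at left_gap right_gap
    exact ⟨_, _, _, _, by omega, hf (Fin.mk_lt_mk.2 (by omega)), by omega, hcol⟩
  · rintro ⟨x, y, z, w, hxy, hyz, hzw, hcol⟩
    rw [Fin.lt_def] at hyz
    let f : Fin (m + n) → Fin N := fun i =>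
      if h : (i : ℕ) = 0 then x
      else if h' : (i : ℕ) < m then ⟨y + i - (m - 1), by omega⟩
      else if h'' : (i : ℕ) < m + n - 1 then ⟨z + i - m, by omega⟩
      else w
    refine ⟨f, fun i j hij => ?_, ?_⟩
    · rw [Fin.lt_def] at hij
      simp only [f, Fin.lt_def]
      split_ifs <;> (try dsimp only) <;> omega
    · convert hcol using 2 <;> simp only [f] <;> split_ifs <;>
        first | rfl | omega | (ext; dsimp only; omega)

theorem orderedRamsey_eq_of_forall_of_exists {M N t : ℕ} {G : SimpleGraph (Fin M)}
    (hN : ∀ c : Fin N → Fin N → Fin t, HasMonoCopy G c)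
    (hlt : ∀ N' < N, ∃ c : Fin N' → Fin N' → Fin t, ¬ HasMonoCopy G c) :
    orderedRamsey t G = N :=
  le_antisymm (Nat.sInf_le hN) <| le_csInf ⟨N, hN⟩ fun N' hN' =>
    not_lt.1 fun h => (hlt N' h).elim fun c hc => hc (hN' c)

theorem hasMonoCopy_nestedEdgesGraph_of_two_colors {m n : ℕ} (hm : 2 ≤ m) (hn : 2 ≤ n)
    (c : Fin (2 * m + 2 * n - 2) → Fin (2 * m + 2 * n - 2) → Fin 2) :
    HasMonoCopy (nestedEdgesGraph m n (by omega)) c := by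
  rw [hasMonoCopy_nestedEdgesGraph_iff hm hn]
  obtain ⟨x, hx⟩ : ∃ x : Fin (2 * m + 2 * n - 2), (x : ℕ) = 0 := ⟨⟨0, by omega⟩, rfl⟩
  obtain ⟨y, hy⟩ : ∃ y : Fin (2 * m + 2 * n - 2), (y : ℕ) = m - 1 := ⟨⟨m - 1, by omega⟩, rfl⟩
  obtain ⟨y', hy'⟩ : ∃ y' : Fin (2 * m + 2 * n - 2), (y' : ℕ) = 2 * m - 2 :=
    ⟨⟨2 * m - 2, by omega⟩, rfl⟩
  obtain ⟨z', hz'⟩ : ∃ z' : Fin (2 * m + 2 * n - 2), (z' : ℕ) = 2 * m - 1 :=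
    ⟨⟨2 * m - 1, by omega⟩, rfl⟩
  obtain ⟨z, hz⟩ : ∃ z : Fin (2 * m + 2 * n - 2), (z : ℕ) = 2 * m + n - 2 :=
    ⟨⟨2 * m + n - 2, by omega⟩, rfl⟩
  obtain ⟨w, hw⟩ : ∃ w : Fin (2 * m + 2 * n - 2), (w : ℕ) = 2 * m + 2 * n - 3 :=
    ⟨⟨2 * m + 2 * n - 3, by omega⟩, rfl⟩
  have pigeonhole : c x w = c y z ∨ c x w = c y' z' ∨ c y z = c y' z' := by omega
  rcases pigeonhole with h | h | h
  · exact ⟨x, y, z, w, by omega, Fin.lt_def.2 (by omega), by omega, h⟩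
  · exact ⟨x, y', z', w, by omega, Fin.lt_def.2 (by omega), by omega, h⟩
  · exact ⟨y, y', z', z, by omega, Fin.lt_def.2 (by omega), by omega, h⟩

def thresholdColoring (N L : ℕ) : Fin N → Fin N → Fin 2 :=
  fun u v => if (u : ℕ) + L ≤ v then 0 else 1

theorem not_hasMonoCopy_nestedEdgesGraph_thresholdColoring {m n N : ℕ} (hm : 2 ≤ m)
    (hn : 2 ≤ n) (hN : N < 2 * m + 2 * n - 2) :
    ¬ HasMonoCopy (nestedEdgesGraph m n (by omega)) (thresholdColoring N (m + n - 1)) := by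
  rw [hasMonoCopy_nestedEdgesGraph_iff hm hn]
  rintro ⟨x, y, z, w, hxy, hyz, hzw, hcol⟩
  rw [Fin.lt_def] at hyz
  have hwN := w.isLt
  simp only [thresholdColoring] at hcol
  split_ifs at hcol <;> omega

/-- If `G` is the ordered graph on `v_1,…,v_{m+n}` whose only edges are the nested
edges `v_1 v_{m+n}` and `v_m v_{m+1}`, then `R(G) = 2m + 2n - 2`. -/
theorem stmt3 {m n : ℕ} (hm : 2 ≤ m) (hn : 2 ≤ n)
    (G : SimpleGraph (Fin (m + n)))
    (hG : G = SimpleGraph.fromEdgeSet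
      {s((⟨0, by omega⟩ : Fin (m + n)), (⟨m + n - 1, by omega⟩ : Fin (m + n))),
       s((⟨m - 1, by omega⟩ : Fin (m + n)), (⟨m, by omega⟩ : Fin (m + n)))}) :
    orderedRamsey 2 G = 2 * m + 2 * n - 2 := by
  change G = nestedEdgesGraph m n (by omega) at hG
  subst hG
  exact orderedRamsey_eq_of_forall_of_exists (hasMonoCopy_nestedEdgesGraph_of_two_colors hm hn)
    fun N hN => ⟨_, not_hasMonoCopy_nestedEdgesGraph_thresholdColoring hm hn hN⟩
end

section
/- Let t ≥ 2 and let G be a stitched 2-ichromatic ordered graph with parts of sizes m and n. Then the t-color ordered Ramsey number satisfies R_t(G) ≥ 2tr + 1, where r = min(m,n) - 1. -/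
def st9F (t i j : ℕ) : ℕ :=
  if i = j then (if i < t then i else 2*t-2-i)
  else if i < 2*t-1-j then i
  else if i = 2*t-1-j then (if i+1 ≤ t-1 then i+1 else t-1)
  else if j = i+1 then 2*t-j
  else 2*t-1-j

def st9cent (t g i j : ℕ) : ℕ :=
  if i = j ∧ i+1 = t then 2*i
  else if i = j ∧ t ≤ i then 2*i+1
  else if i + j ≤ 2*t-2 then (if g = 2*t-2-i then 2*(2*t-2-i)+1 else 2*i)
  else if i + j = 2*t-1 ∧ i+1 = t then 2*i
  else 2*j+1

/-- Addition-only specification of `st9F` (valid when `i ≤ j < 2t`). -/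
def st9FSpec (t i j k : ℕ) : Prop :=
  (i = j ∧ i < t ∧ k = i) ∨
  (i = j ∧ t ≤ i ∧ ((i+2 ≤ 2*t ∧ k+i+2 = 2*t) ∨ (2*t < i+2 ∧ k = 0))) ∨
  (i ≠ j ∧ i+j+1 < 2*t ∧ k = i) ∨
  (i ≠ j ∧ i+j+1 = 2*t ∧ i+2 ≤ t ∧ k = i+1) ∨
  (i ≠ j ∧ i+j+1 = 2*t ∧ t ≤ i+1 ∧ k+1 = t) ∨
  (i ≠ j ∧ 2*t < i+j+1 ∧ j = i+1 ∧ k+j = 2*t) ∨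
  (i ≠ j ∧ 2*t < i+j+1 ∧ j ≠ i+1 ∧ k+j+1 = 2*t)

/-- Addition-only specification of `st9cent` (valid when `i ≤ j < 2t`, `2 ≤ t`). -/
def st9centSpec (t g i j d : ℕ) : Prop :=
  (i = j ∧ i+1 = t ∧ d = 2*i) ∨
  (i = j ∧ t ≤ i ∧ d = 2*i+1) ∨
  ((i ≠ j ∨ i+2 ≤ t) ∧ i+j+2 ≤ 2*t ∧ g+i+2 = 2*t ∧ d = 2*g+1) ∨
  ((i ≠ j ∨ i+2 ≤ t) ∧ i+j+2 ≤ 2*t ∧ g+i+2 ≠ 2*t ∧ d = 2*i) ∨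
  (i ≠ j ∧ i+j+1 = 2*t ∧ i+1 = t ∧ d = 2*i) ∨
  (i ≠ j ∧ 2*t < i+j+2 ∧ ¬(i+j+1 = 2*t ∧ i+1 = t) ∧ d = 2*j+1)

lemma st9FSpec_of {t i j k : ℕ} (ht : 2 ≤ t) (hij : i ≤ j) (hj : j < 2*t)
    (h : st9F t i j = k) : st9FSpec t i j k := by
  unfold st9F at h
  unfold st9FSpec
  split_ifs at h with c1 c2 c3 c4 c5 c6
  · exact Or.inl ⟨c1, c2, h.symm⟩
  · exact Or.inr (Or.inl ⟨c1, by omega, by omega⟩)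
  · exact Or.inr (Or.inr (Or.inl ⟨c1, by omega, h.symm⟩))
  · exact Or.inr (Or.inr (Or.inr (Or.inl ⟨c1, by omega, by omega, by omega⟩)))
  · exact Or.inr (Or.inr (Or.inr (Or.inr (Or.inl ⟨c1, by omega, by omega, by omega⟩))))
  · exact Or.inr (Or.inr (Or.inr (Or.inr (Or.inr (Or.inl ⟨c1, by omega, c6, by omega⟩)))))
  · exact Or.inr (Or.inr (Or.inr (Or.inr (Or.inr (Or.inr ⟨c1, by omega, c6, by omega⟩)))))

lemma st9centSpec_of {t g i j : ℕ} (ht : 2 ≤ t) (hij : i ≤ j) (hj : j < 2*t) :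
    st9centSpec t g i j (st9cent t g i j) := by
  unfold st9cent
  unfold st9centSpec
  split_ifs with c1 c2 c3 c4 c5
  · exact Or.inl ⟨c1.1, c1.2, rfl⟩
  · exact Or.inr (Or.inl ⟨c2.1, c2.2, rfl⟩)
  · refine Or.inr (Or.inr (Or.inl ⟨?_, by omega, by omega, by omega⟩)); by_cases hd : i = j
    · right; subst hd; omega
    · left; exact hd
  · refine Or.inr (Or.inr (Or.inr (Or.inl ⟨?_, by omega, by omega, rfl⟩))); by_cases hd : i = j
    · right; subst hd; omega
    · left; exact hd
  · exact Or.inr (Or.inr (Or.inr (Or.inr (Or.inl ⟨by omega, by omega, c5.2, rfl⟩))))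
  · refine Or.inr (Or.inr (Or.inr (Or.inr (Or.inr ⟨?_, by omega, by omega, rfl⟩))))
    intro hd; subst hd; omega

lemma st9cent_of_spec {t g i j d : ℕ} (h : st9centSpec t g i j d) : st9cent t g i j = d := by
  unfold st9cent
  unfold st9centSpec at h
  split_ifs with c1 c2 c3 c4 c5 <;> omega

set_option maxHeartbeats 2000000 in
lemma st9share {t β γ i j i' j' : ℕ} (ht : 2 ≤ t) (hβγ : β ≤ γ)
    (h1 : i ≤ β) (h2 : γ ≤ j) (h3 : j < 2*t) (h4 : i ≤ j)
    (h1' : i' ≤ β) (h2' : γ ≤ j') (h3' : j' < 2*t) (h4' : i' ≤ j')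
    (hF : st9F t i j = st9F t i' j') (hsh : i = i' ∨ j = j') :
    st9cent t γ i j = st9cent t γ i' j' := by
  have hs1 := st9FSpec_of ht h4 h3 (rfl : st9F t i j = st9F t i j)
  have hs2 := st9FSpec_of ht h4' h3' hF.symm
  have hc1 := st9centSpec_of (g := γ) ht h4 h3
  have hc2 := st9centSpec_of (g := γ) ht h4' h3'
  generalize hd1 : st9cent t γ i j = d1 at hc1 ⊢
  generalize hd2 : st9cent t γ i' j' = d2 at hc2 ⊢
  unfold st9FSpec at hs1 hs2
  unfold st9centSpec at hc1 hc2
  omega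

lemma st9centL {t g i j d : ℕ} (h : st9cent t g i j = d) (hd : d % 2 = 0) : 2*i = d := by
  unfold st9cent at h; split_ifs at h <;> omega

lemma st9centR {t g i j d : ℕ} (h : st9cent t g i j = d) (hd : d % 2 = 1) (hgj : g ≤ j) :
    2*j + 1 = d := by
  unfold st9cent at h; split_ifs at h <;> omega

lemma st9focus {t : ℕ} (ht : 2 ≤ t) (c : ℕ → ℕ → Fin t) :
    ∀ (L : ℕ) (S : Finset ℕ), t ^ L ≤ S.card →
    ∃ (a : Fin L → ℕ) (g : Fin L → Fin t), StrictMono a ∧ (∀ i, a i ∈ S) ∧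
      ∀ i j : Fin L, i < j → c (a i) (a j) = g i := by
  intro L
  induction L with
  | zero =>
    intro S _
    exact ⟨Fin.elim0, Fin.elim0, fun i => i.elim0, fun i => i.elim0, fun i => i.elim0⟩
  | succ L ih =>
    intro S hS
    have hP : 1 ≤ t ^ L := Nat.one_le_pow _ _ (by omega)
    have hPS : t ^ L * t ≤ S.card := by rw [← pow_succ]; exact hS
    have htt : t ≤ t ^ L * t := Nat.le_mul_of_pos_left t hP
    have hne : S.Nonempty := by rw [← Finset.card_pos]; omega
    set a0 := S.min' hne with ha0
    set T := S.erase a0 with hT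
    have hTcard : T.card = S.card - 1 := Finset.card_erase_of_mem (S.min'_mem hne)
    have hfib : ∃ k : Fin t, t ^ L ≤ (T.filter (fun x => c a0 x = k)).card := by
      have hmaps : ∀ x ∈ T, c a0 x ∈ (Finset.univ : Finset (Fin t)) :=
        fun x _ => Finset.mem_univ _
      have hcardlt : (Finset.univ : Finset (Fin t)).card * (t^L - 1) < T.card := by
        rw [Finset.card_univ, Fintype.card_fin]
        obtain ⟨d, hd⟩ := Nat.exists_eq_add_of_le hP
        have h1 : t * (t ^ L - 1) = t * d := by rw [hd, Nat.add_sub_cancel_left]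
        have h2 : t ^ L * t = t * d + t := by rw [hd]; ring
        omega
      obtain ⟨k, _, hk⟩ :=
        Finset.exists_lt_card_fiber_of_mul_lt_card_of_maps_to hmaps hcardlt
      exact ⟨k, by omega⟩
    obtain ⟨k, hk⟩ := hfib
    obtain ⟨a, g, hmono, hmem, hcol⟩ := ih (T.filter (fun x => c a0 x = k)) hk
    have ha0lt : ∀ i, a0 < a i := by
      intro i
      have h1 := hmem i
      rw [Finset.mem_filter, Finset.mem_erase] at h1
      have h2 := S.min'_le _ h1.1.2
      rcases lt_or_eq_of_le h2 with h | h
      · exact h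
      · exact absurd h.symm h1.1.1
    refine ⟨Fin.cons a0 a, Fin.cons k g, ?_, ?_, ?_⟩
    · intro p q hpq
      induction q using Fin.cases with
      | zero => exact absurd hpq (Fin.not_lt_zero p)
      | succ q' =>
        induction p using Fin.cases with
        | zero =>
          simp only [Fin.cons_zero, Fin.cons_succ]
          exact ha0lt q'
        | succ p' =>
          simp only [Fin.cons_succ]
          exact hmono (Fin.succ_lt_succ_iff.mp hpq)
    · intro i
      induction i using Fin.cases with
      | zero => simpa using S.min'_mem hne
      | succ i' =>
        simp only [Fin.cons_succ]
        have h1 := hmem i'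
        rw [Finset.mem_filter, Finset.mem_erase] at h1
        exact h1.1.2
    · intro p q hpq
      induction p using Fin.cases with
      | zero =>
        induction q using Fin.cases with
        | zero => exact absurd hpq (lt_irrefl _)
        | succ q' =>
          simp only [Fin.cons_zero, Fin.cons_succ]
          have h1 := hmem q'
          rw [Finset.mem_filter] at h1
          exact h1.2
      | succ p' =>
        induction q using Fin.cases with
        | zero => exact absurd hpq (Fin.not_lt_zero _)
        | succ q' =>
          simp only [Fin.cons_succ]
          exact hcol p' q' (Fin.succ_lt_succ_iff.mp hpq)

lemma st9ramsey (s t : ℕ) (ht : 2 ≤ t) :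
    ∃ N : ℕ, ∀ c : Fin N → Fin N → Fin t,
      ∃ (k : Fin t) (f : Fin s → Fin N), StrictMono f ∧
        ∀ u v : Fin s, u < v → c (f u) (f v) = k := by
  set L := t * (s - 1) + 1 with hL
  refine ⟨t ^ L, ?_⟩
  intro c
  have hNpos : 0 < t ^ L := by positivity
  set cc : ℕ → ℕ → Fin t :=
    fun x y => c ⟨x % (t ^ L), Nat.mod_lt _ hNpos⟩ ⟨y % (t ^ L), Nat.mod_lt _ hNpos⟩ with hcc
  obtain ⟨a, g, hmono, hmem, hcol⟩ :=
    st9focus ht cc L (Finset.range (t ^ L)) (by rw [Finset.card_range])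
  have hfib : ∃ k : Fin t, s ≤ ((Finset.univ : Finset (Fin L)).filter
      (fun i => g i = k)).card := by
    have hmaps : ∀ x ∈ (Finset.univ : Finset (Fin L)),
        g x ∈ (Finset.univ : Finset (Fin t)) := fun x _ => Finset.mem_univ _
    have hlt : (Finset.univ : Finset (Fin t)).card * (s - 1) <
        (Finset.univ : Finset (Fin L)).card := by
      rw [Finset.card_univ, Finset.card_univ, Fintype.card_fin, Fintype.card_fin]
      omega
    obtain ⟨k, _, hk⟩ := Finset.exists_lt_card_fiber_of_mul_lt_card_of_maps_to hmaps hlt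
    exact ⟨k, by omega⟩
  obtain ⟨k, hk⟩ := hfib
  obtain ⟨Q, hQsub, hQcard⟩ := Finset.exists_subset_card_eq hk
  set io := Q.orderIsoOfFin hQcard with hio
  have hmemN : ∀ q : Fin s, a ((io q : Q) : Fin L) < t ^ L := by
    intro q
    have := hmem ((io q : Q) : Fin L)
    rwa [Finset.mem_range] at this
  refine ⟨k, fun q => ⟨a ((io q : Q) : Fin L), hmemN q⟩, ?_, ?_⟩
  · intro u v huv
    have h1 : ((io u : Q) : Fin L) < ((io v : Q) : Fin L) :=
      Subtype.coe_lt_coe.mpr (io.strictMono huv)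
    exact hmono h1
  · intro u v huv
    have h1 : ((io u : Q) : Fin L) < ((io v : Q) : Fin L) :=
      Subtype.coe_lt_coe.mpr (io.strictMono huv)
    have h2 := hcol _ _ h1
    have h3 : g ((io u : Q) : Fin L) = k := by
      have hm : ((io u : Q) : Fin L) ∈ Q := (io u).2
      have := hQsub hm
      rw [Finset.mem_filter] at this
      exact this.2
    rw [h3] at h2
    simpa [hcc, Nat.mod_eq_of_lt (hmemN u), Nat.mod_eq_of_lt (hmemN v)] using h2

lemma st9F_lt {t i j : ℕ} (ht : 2 ≤ t) (hij : i ≤ j) (hj : j < 2*t) : st9F t i j < t := by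
  unfold st9F; split_ifs <;> omega

lemma st9gap {M N : ℕ} {f : Fin M → Fin N} (hf : StrictMono f) (a b : Fin M)
    (hab : (a : ℕ) ≤ (b : ℕ)) : (f a : ℕ) + ((b : ℕ) - (a : ℕ)) ≤ (f b : ℕ) := by
  have key : ∀ (d e : ℕ) (h1 : e < M) (h2 : e + d < M),
      (f ⟨e, h1⟩ : ℕ) + d ≤ (f ⟨e + d, h2⟩ : ℕ) := by
    intro d
    induction d with
    | zero => intro e h1 h2; simp
    | succ d ihd =>
      intro e h1 h2
      have h3 : e + d < M := by omega
      have h4 := ihd e h1 h3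
      have h5 : (⟨e + d, h3⟩ : Fin M) < ⟨e + (d+1), h2⟩ := by
        simp only [Fin.lt_def]; omega
      have h6 := Fin.lt_def.mp (hf h5)
      omega
  have h1 : (a:ℕ) + ((b:ℕ) - (a:ℕ)) < M := by have := b.isLt; omega
  have h2 : (⟨(a:ℕ) + ((b:ℕ) - (a:ℕ)), h1⟩ : Fin M) = b :=
    Fin.ext (show (a:ℕ) + ((b:ℕ) - (a:ℕ)) = (b:ℕ) by omega)
  have h3 : (⟨(a:ℕ), a.isLt⟩ : Fin M) = a := Fin.ext rfl
  have := key ((b:ℕ) - (a:ℕ)) (a:ℕ) a.isLt h1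
  rwa [h2, h3] at this


set_option maxHeartbeats 1000000 in
lemma st9avoid {m n t r : ℕ} (ht : 2 ≤ t) (hr : 1 ≤ r) (hrm : r + 1 ≤ m) (hrn : r + 1 ≤ n)
    (G : SimpleGraph (Fin (m + n)))
    (hpart1 : ∀ u v : Fin (m + n), (u : ℕ) < m → (v : ℕ) < m → ¬ G.Adj u v)
    (hpart2 : ∀ u v : Fin (m + n), m ≤ (u : ℕ) → m ≤ (v : ℕ) → ¬ G.Adj u v)
    (v1 vm vm1 vl : Fin (m + n))
    (hv1 : (v1 : ℕ) = 0) (hvm : (vm : ℕ) = m - 1)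
    (hvm1 : (vm1 : ℕ) = m) (hvl : (vl : ℕ) = m + n - 1)
    (hre1 : G.Reachable v1 vm) (hre2 : G.Reachable v1 vm1) (hre3 : G.Reachable v1 vl) :
    ¬ HasMonoCopy G (fun x y : Fin (2*t*r) =>
      (⟨st9F t ((x : ℕ) / r) ((y : ℕ) / r) % t, Nat.mod_lt _ (by omega)⟩ : Fin t)) := by
  rintro ⟨k, f, hf, hcol⟩
  have hBC : (f vm : ℕ) < (f vm1 : ℕ) := by
    have h1 : vm < vm1 := by rw [Fin.lt_def, hvm, hvm1]; omega
    exact Fin.lt_def.mp (hf h1)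
  have hβγ : (f vm : ℕ) / r ≤ (f vm1 : ℕ) / r := Nat.div_le_div_right (le_of_lt hBC)
  have hside : ∀ u w : Fin (m+n), G.Adj u w →
      ((u:ℕ) < m ∧ m ≤ (w:ℕ)) ∨ ((w:ℕ) < m ∧ m ≤ (u:ℕ)) := by
    intro u w h
    rcases lt_or_ge (u:ℕ) m with h1 | h1 <;> rcases lt_or_ge (w:ℕ) m with h2 | h2
    · exact absurd h (hpart1 u w h1 h2)
    · exact Or.inl ⟨h1, h2⟩
    · exact Or.inr ⟨h2, h1⟩
    · exact absurd h (hpart2 u w h1 h2)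
  have hedge : ∀ u w : Fin (m+n), G.Adj u w → (u:ℕ) < m → m ≤ (w:ℕ) →
      st9F t ((f u : ℕ) / r) ((f w : ℕ) / r) = (k : ℕ) ∧
      (f u : ℕ) / r ≤ (f vm : ℕ) / r ∧ (f vm1 : ℕ) / r ≤ (f w : ℕ) / r ∧
      (f w : ℕ) / r < 2*t ∧ (f u : ℕ) / r ≤ (f w : ℕ) / r := by
    intro u w hadj hu hw
    have hle1 : u ≤ vm := by rw [Fin.le_def, hvm]; omega
    have hle2 : vm1 ≤ w := by rw [Fin.le_def, hvm1]; omega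
    have hx : (f u : ℕ) ≤ (f vm : ℕ) := Fin.le_def.mp (hf.monotone hle1)
    have hy : (f vm1 : ℕ) ≤ (f w : ℕ) := Fin.le_def.mp (hf.monotone hle2)
    have hwlt : (f w : ℕ) < 2*t*r := (f w).isLt
    have hj2t : (f w : ℕ)/r < 2*t := by
      rw [Nat.div_lt_iff_lt_mul (by omega : 0 < r)]; exact hwlt
    have hulw : u < w := by rw [Fin.lt_def]; omega
    have hcv := hcol u w hulw hadj
    have hFmod : st9F t ((f u:ℕ)/r) ((f w:ℕ)/r) % t = (k:ℕ) := congrArg Fin.val hcv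
    have hij : (f u : ℕ)/r ≤ (f w : ℕ)/r := Nat.div_le_div_right (by omega)
    have hFlt : st9F t ((f u:ℕ)/r) ((f w:ℕ)/r) < t := st9F_lt ht hij hj2t
    exact ⟨by rwa [Nat.mod_eq_of_lt hFlt] at hFmod,
      Nat.div_le_div_right hx, Nat.div_le_div_right hy, hj2t, hij⟩
  set ctr : Fin (m+n) → Fin (m+n) → ℕ := fun u w =>
    if (u:ℕ) < m then st9cent t ((f vm1 : ℕ)/r) ((f u : ℕ)/r) ((f w : ℕ)/r)
    else st9cent t ((f vm1 : ℕ)/r) ((f w : ℕ)/r) ((f u : ℕ)/r) with hctr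
  have hadjsh : ∀ u a b : Fin (m+n), G.Adj u a → G.Adj u b → ctr u a = ctr u b := by
    intro u a b h1 h2
    rcases hside u a h1 with ⟨hu, ha⟩ | ⟨ha, hu⟩
    · have hb : m ≤ (b:ℕ) := by
        rcases hside u b h2 with ⟨_, hb⟩ | ⟨_, hu'⟩
        · exact hb
        · omega
      obtain ⟨hF1, hi1, hj1, h2t1, hij1⟩ := hedge u a h1 hu ha
      obtain ⟨hF2, hi2, hj2, h2t2, hij2⟩ := hedge u b h2 hu hb
      simp only [hctr, if_pos hu]
      exact st9share ht hβγ hi1 hj1 h2t1 hij1 hi2 hj2 h2t2 hij2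
        (by rw [hF1, hF2]) (Or.inl rfl)
    · have hb : (b:ℕ) < m := by
        rcases hside u b h2 with ⟨hu', _⟩ | ⟨hb, _⟩
        · omega
        · exact hb
      obtain ⟨hF1, hi1, hj1, h2t1, hij1⟩ := hedge a u h1.symm ha hu
      obtain ⟨hF2, hi2, hj2, h2t2, hij2⟩ := hedge b u h2.symm hb hu
      simp only [hctr, if_neg (by omega : ¬ (u:ℕ) < m)]
      exact st9share ht hβγ hi1 hj1 h2t1 hij1 hi2 hj2 h2t2 hij2
        (by rw [hF1, hF2]) (Or.inr rfl)
  have hsym : ∀ u w : Fin (m+n), G.Adj u w → ctr u w = ctr w u := by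
    intro u w h
    rcases hside u w h with ⟨hu, hw⟩ | ⟨hw, hu⟩
    · simp only [hctr]; rw [if_pos hu, if_neg (by omega : ¬ (w:ℕ) < m)]
    · simp only [hctr]; rw [if_neg (by omega : ¬ (u:ℕ) < m), if_pos hw]
  have hwl : ∀ (u w : Fin (m+n)) (p : G.Walk u w) (a b : Fin (m+n)),
      G.Adj u a → G.Adj w b → ctr u a = ctr w b := by
    intro u w p
    induction p with
    | nil => intro a b h1 h2; exact hadjsh _ _ _ h1 h2
    | @cons x y z hxy q ih =>
      intro a b h1 h2
      calc ctr x a = ctr x y := hadjsh _ _ _ h1 hxy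
        _ = ctr y x := hsym _ _ hxy
        _ = ctr z b := ih _ _ hxy.symm h2
  have hnbr : ∀ (u w : Fin (m+n)), u ≠ w → G.Walk u w → ∃ z, G.Adj u z := by
    intro u w hne p
    cases p with
    | nil => exact absurd rfl hne
    | cons h _ => exact ⟨_, h⟩
  obtain ⟨p1⟩ := hre1
  obtain ⟨p2⟩ := hre2
  obtain ⟨p3⟩ := hre3
  have hne1 : v1 ≠ vm := by rw [ne_eq, Fin.ext_iff, hv1, hvm]; omega
  have hne2 : v1 ≠ vm1 := by rw [ne_eq, Fin.ext_iff, hv1, hvm1]; omega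
  have hne3 : v1 ≠ vl := by rw [ne_eq, Fin.ext_iff, hv1, hvl]; omega
  obtain ⟨z0, hz0⟩ := hnbr v1 vm hne1 p1
  obtain ⟨zm, hzm⟩ := hnbr vm v1 (Ne.symm hne1) p1.reverse
  obtain ⟨zm1, hzm1⟩ := hnbr vm1 v1 (Ne.symm hne2) p2.reverse
  obtain ⟨zl, hzl⟩ := hnbr vl v1 (Ne.symm hne3) p3.reverse
  have e1 : ctr v1 z0 = ctr vm zm := hwl _ _ p1 _ _ hz0 hzm
  have e2 : ctr v1 z0 = ctr vm1 zm1 := hwl _ _ p2 _ _ hz0 hzm1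
  have e3 : ctr v1 z0 = ctr vl zl := hwl _ _ p3 _ _ hz0 hzl
  have hv1m : (v1:ℕ) < m := by omega
  have hvmm : (vm:ℕ) < m := by omega
  have hvm1m : ¬ (vm1:ℕ) < m := by omega
  have hvlm : ¬ (vl:ℕ) < m := by omega
  have c1 : st9cent t ((f vm1 : ℕ)/r) ((f v1:ℕ)/r) ((f z0:ℕ)/r) = ctr v1 z0 := by
    simp only [hctr, if_pos hv1m]
  have c2 : st9cent t ((f vm1 : ℕ)/r) ((f vm:ℕ)/r) ((f zm:ℕ)/r) = ctr v1 z0 := by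
    rw [e1]; simp only [hctr, if_pos hvmm]
  have c3 : st9cent t ((f vm1 : ℕ)/r) ((f zm1:ℕ)/r) ((f vm1:ℕ)/r) = ctr v1 z0 := by
    rw [e2]; simp only [hctr, if_neg hvm1m]
  have c4 : st9cent t ((f vm1 : ℕ)/r) ((f zl:ℕ)/r) ((f vl:ℕ)/r) = ctr v1 z0 := by
    rw [e3]; simp only [hctr, if_neg hvlm]
  rcases Nat.mod_two_eq_zero_or_one (ctr v1 z0) with hpar | hpar
  · have b1 := st9centL c1 hpar
    have b2 := st9centL c2 hpar
    have hdiv : (f v1:ℕ)/r = (f vm:ℕ)/r := by omega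
    have hgap : (f v1 : ℕ) + ((vm:ℕ) - (v1:ℕ)) ≤ (f vm : ℕ) :=
      st9gap hf v1 vm (by omega)
    have k1 := Nat.div_add_mod (f v1:ℕ) r
    have k2 := Nat.div_add_mod (f vm:ℕ) r
    have k3 : (f v1:ℕ) % r < r := Nat.mod_lt _ (by omega)
    have k4 : (f vm:ℕ) % r < r := Nat.mod_lt _ (by omega)
    rw [hdiv] at k1
    omega
  · have hγle : (f vm1:ℕ)/r ≤ (f vm1:ℕ)/r := le_refl _
    have hγle2 : (f vm1:ℕ)/r ≤ (f vl:ℕ)/r := by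
      have hle : vm1 ≤ vl := by rw [Fin.le_def, hvm1, hvl]; omega
      exact Nat.div_le_div_right (Fin.le_def.mp (hf.monotone hle))
    have b3 := st9centR c3 hpar hγle
    have b4 := st9centR c4 hpar hγle2
    have hdiv : (f vm1:ℕ)/r = (f vl:ℕ)/r := by omega
    have hgap : (f vm1 : ℕ) + ((vl:ℕ) - (vm1:ℕ)) ≤ (f vl : ℕ) :=
      st9gap hf vm1 vl (by omega)
    have k1 := Nat.div_add_mod (f vm1:ℕ) r
    have k2 := Nat.div_add_mod (f vl:ℕ) r
    have k3 : (f vm1:ℕ) % r < r := Nat.mod_lt _ (by omega)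
    have k4 : (f vl:ℕ) % r < r := Nat.mod_lt _ (by omega)
    rw [hdiv] at k1
    omega

/-- For `t ≥ 2`, if `G` is a stitched 2-ichromatic ordered graph with parts of sizes
`m` and `n`, then `R_t(G) ≥ 2tr + 1` where `r = min(m,n) - 1`. -/
theorem stmt9 {m n t : ℕ} (ht : 2 ≤ t) (hm : 1 ≤ m) (hn : 1 ≤ n)
    (G : SimpleGraph (Fin (m + n)))
    (hichrom : intervalChromatic G = 2)
    (hpart1 : ∀ u v : Fin (m + n), (u : ℕ) < m → (v : ℕ) < m → ¬ G.Adj u v)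
    (hpart2 : ∀ u v : Fin (m + n), m ≤ (u : ℕ) → m ≤ (v : ℕ) → ¬ G.Adj u v)
    (hstitched : G.Reachable ⟨0, by omega⟩ ⟨m - 1, by omega⟩ ∧
      G.Reachable ⟨0, by omega⟩ ⟨m, by omega⟩ ∧
      G.Reachable ⟨0, by omega⟩ ⟨m + n - 1, by omega⟩) :
    2 * t * (min m n - 1) + 1 ≤ orderedRamsey t G := by
  have hne : {N : ℕ | ∀ c : Fin N → Fin N → Fin t, HasMonoCopy G c}.Nonempty := by
    obtain ⟨N₀, hN₀⟩ := st9ramsey (m+n) t ht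
    refine ⟨N₀, ?_⟩
    intro c
    obtain ⟨k, f, hf, hc⟩ := hN₀ c
    exact ⟨k, f, hf, fun u v huv _ => hc u v huv⟩
  show 2 * t * (min m n - 1) + 1 ≤ sInf _
  refine le_csInf hne ?_
  intro N' hN'
  by_contra hcon
  push_neg at hcon
  have hle : N' ≤ 2 * t * (min m n - 1) := by omega
  have hmem : ∀ c : Fin (2*t*(min m n - 1)) → Fin (2*t*(min m n - 1)) → Fin t,
      HasMonoCopy G c := by
    intro c
    obtain ⟨k, f, hf, hc⟩ := hN' (fun x y => c (x.castLE hle) (y.castLE hle))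
    refine ⟨k, fun u => (f u).castLE hle, ?_, fun u v huv hadj => hc u v huv hadj⟩
    intro a b hab
    have := hf hab
    rw [Fin.lt_def] at this ⊢
    simpa using this
  rcases Nat.eq_zero_or_pos (min m n - 1) with hr0 | hrpos
  · rw [hr0] at hmem
    obtain ⟨k, f, hf, hc⟩ := hmem (fun x _ => x.elim0)
    exact (f ⟨0, by omega⟩).elim0
  · have hmn1 : min m n ≤ m := min_le_left m n
    have hmn2 : min m n ≤ n := min_le_right m n
    have hrm : (min m n - 1) + 1 ≤ m := by omega
    have hrn : (min m n - 1) + 1 ≤ n := by omega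
    exact st9avoid ht hrpos hrm hrn G hpart1 hpart2
      ⟨0, by omega⟩ ⟨m-1, by omega⟩ ⟨m, by omega⟩ ⟨m+n-1, by omega⟩
      rfl rfl rfl rfl hstitched.1 hstitched.2.1 hstitched.2.2
      (hmem _)
end
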